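/- The system Scal(π/2) = 2 and Scal(0) = 2, where Scal(0) = (2 - 4β(n-2)(6α+2) + 54α)/(1+3α) and Scal(π/2) = 2(1 - 9α - 3β - 5αβ + 2n(1-α)β)/((1-α)(1+β)), has exactly the two solutions (α,β) = (0,0) and (α,β) = ((n-2)/(3(3n-2)), 1/(2(n-1))) in the region α ∈ (-1/3, 1), β ∈ (-1, ∞), for each integer n ≥ 3. -/

import Mathlib

/-- For integers `n ≥ 3`, in the region `α ∈ (-1/3, 1)`, `β ∈ (-1, ∞)`, the system
`Scal(0) = 2`, `Scal(π/2) = 2` has exactly the two solutions `(0,0)` and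
`((n-2)/(3(3n-2)), 1/(2(n-1)))`. -/
theorem stmt_8 (n : ℕ) (hn : 3 ≤ n) (α β : ℝ)
    (hα₁ : -(1/3) < α) (hα₂ : α < 1) (hβ : -1 < β) :
    ((2 - 4 * β * ((n : ℝ) - 2) * (6 * α + 2) + 54 * α) / (1 + 3 * α) = 2 ∧
     2 * (1 - 9 * α - 3 * β - 5 * α * β + 2 * (n : ℝ) * (1 - α) * β) /
       ((1 - α) * (1 + β)) = 2)
    ↔ ((α = 0 ∧ β = 0) ∨
       (α = ((n : ℝ) - 2) / (3 * (3 * (n : ℝ) - 2)) ∧ β = 1 / (2 * ((n : ℝ) - 1)))) := by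
  have hN : (3:ℝ) ≤ (n:ℝ) := by exact_mod_cast hn
  set N : ℝ := (n:ℝ) with hNdef
  have h3α : (0:ℝ) < 1 + 3 * α := by linarith
  have h1α : (0:ℝ) < 1 - α := by linarith
  have h1β : (0:ℝ) < 1 + β := by linarith
  have hden : (1 - α) * (1 + β) ≠ 0 := by positivity
  have hN2 : (0:ℝ) < N - 2 := by linarith
  have hN1 : (0:ℝ) < N - 1 := by linarith
  have h3N2 : (0:ℝ) < 3 * N - 2 := by linarith
  constructor
  · rintro ⟨e1, e2⟩
    rw [div_eq_iff h3α.ne'] at e1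
    rw [div_eq_iff hden] at e2
    have E1 : β * (N - 2) * (6 * α + 2) - 12 * α = 0 := by linear_combination (-(1:ℝ)/4) * e1
    have E2 : 4 * α - (N - 2) * β + (N + 2) * α * β = 0 := by
      linear_combination (-(1:ℝ)/4) * e2
    have key : α * (24 * α - 4 + (N + 2) * β * (6 * α + 2)) = 0 := by
      linear_combination (6 * α + 2) * E2 + E1
    rcases mul_eq_zero.mp key with hα0 | E3
    · -- α = 0 case
      left
      refine ⟨hα0, ?_⟩
      have hb : β * ((N - 2) * 2) = 0 := by
        rw [hα0] at E1; linear_combination E1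
      rcases mul_eq_zero.mp hb with h | h
      · exact h
      · exfalso; nlinarith
    · -- α ≠ 0 branch: E3 : 24α - 4 + (N+2)β(6α+2) = 0
      right
      have hα5 : α * (9 * N - 6) - (N - 2) = 0 := by
        linear_combination (-(N + 2)/4) * E1 + ((N - 2)/4) * E3
      have hαval : α = (N - 2) / (3 * (3 * N - 2)) := by
        rw [eq_div_iff (by positivity)]
        linear_combination hα5
      have h6 : (N - 2) * (β * (2 * (N - 1)) - 1) = 0 := by
        linear_combination ((3 * N - 2)/4) * E1 + ((4 - 2 * β * (N - 2))/4) * hα5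
      have hβval : β = 1 / (2 * (N - 1)) := by
        rcases mul_eq_zero.mp h6 with h | h
        · exfalso; nlinarith
        · rw [eq_div_iff (by positivity)]; linarith
      exact ⟨hαval, hβval⟩
  · rintro (⟨hA, hB⟩ | ⟨hA, hB⟩)
    · subst hA; subst hB
      constructor <;> · rw [div_eq_iff (by norm_num)]; ring
    · subst hA; subst hB
      constructor
      · rw [div_eq_iff h3α.ne']
        field_simp [show N * 3 - 2 ≠ 0 by linarith, hN1.ne']
        ring
      · rw [div_eq_iff hden]
        field_simp [show N * 3 - 2 ≠ 0 by linarith, hN1.ne']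
        ring
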